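/- The variance of the doubly robust estimator with accurate propensities equals (1/|D|²) Σ_{(u,i)∈D} δ_{u,i}² (1 − p_{u,i})/p_{u,i}, where δ_{u,i} = e_{u,i} − ê_{u,i}. In particular, if |δ_{u,i}| ≤ |e_{u,i}| for all (u,i), the DR variance is at most the IPW variance. -/

import Mathlib

open Finset

/-- Expectation over independent Bernoulli observation indicators. -/
noncomputable def expVal {D : Type*} [Fintype D] [DecidableEq D] (p : D → ℝ) (f : (D → Bool) → ℝ) : ℝ :=
  ∑ o : D → Bool, (∏ d, if o d then p d else 1 - p d) * f o

/-- Variance over independent Bernoulli observation indicators. -/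
noncomputable def varVal {D : Type*} [Fintype D] [DecidableEq D] (p : D → ℝ) (f : (D → Bool) → ℝ) : ℝ :=
  expVal p (fun o => (f o - expVal p f) ^ 2)

/-!
Under the product Bernoulli law the centred indicators `o d - p d` are uncorrelated with variance
`p d (1 - p d)`, so an affine statistic `c + ∑ a d * o d` has variance `∑ (a d)² p d (1 - p d)`.
Both estimators are of this form, with `a d = δ d / (|D| p d)` for DR and `a d = e d / (|D| p d)`
for IPW, so their variances are `|D|⁻² ∑ δ² (1 - p)/p` and `|D|⁻² ∑ e² (1 - p)/p`, and the
comparison is termwise.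
-/

section BernoulliExpectation

variable {D : Type*} [Fintype D] [DecidableEq D] (p : D → ℝ)

lemma expVal_add (f g : (D → Bool) → ℝ) :
    expVal p (fun o => f o + g o) = expVal p f + expVal p g := by
  simp only [expVal, mul_add, sum_add_distrib]

lemma expVal_const_mul (k : ℝ) (f : (D → Bool) → ℝ) :
    expVal p (fun o => k * f o) = k * expVal p f := by
  simp only [expVal, mul_sum]
  exact sum_congr rfl fun o _ => by ring

lemma expVal_sum {ι : Type*} (s : Finset ι) (F : ι → (D → Bool) → ℝ) :
    expVal p (fun o => ∑ i ∈ s, F i o) = ∑ i ∈ s, expVal p (F i) := by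
  simp only [expVal, mul_sum]
  exact sum_comm

lemma expVal_prod_apply (g : D → Bool → ℝ) :
    expVal p (fun o => ∏ d, g d (o d)) = ∏ d, (p d * g d true + (1 - p d) * g d false) := by
  have hfactor : ∀ d, p d * g d true + (1 - p d) * g d false
      = ∑ b, (if b then p d else 1 - p d) * g d b := fun d => by simp
  simp only [expVal, ← prod_mul_distrib, hfactor]
  rw [Fintype.prod_sum]

lemma expVal_const (c : ℝ) : expVal p (fun _ => c) = c := by
  have h := expVal_prod_apply p fun _ _ => 1
  simp only [prod_const_one, mul_one, add_sub_cancel] at h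
  simpa [h] using expVal_const_mul p c fun _ => 1

lemma expVal_comp_eval (d₀ : D) (f : Bool → ℝ) :
    expVal p (fun o => f (o d₀)) = p d₀ * f true + (1 - p d₀) * f false := by
  have h := expVal_prod_apply p fun d b => if d = d₀ then f b else 1
  have hfactor : ∀ d, (p d * (if d = d₀ then f true else 1) + (1 - p d) * (if d = d₀ then f false else 1))
      = if d = d₀ then p d₀ * f true + (1 - p d₀) * f false else 1 := by
    intro d
    split_ifs with hd
    · rw [hd]
    · ring
  simpa only [prod_ite_eq', mem_univ, if_true, hfactor] using h

lemma expVal_comp_eval_mul_comp_eval {d₁ d₂ : D} (hne : d₁ ≠ d₂) (f g : Bool → ℝ) :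
    expVal p (fun o => f (o d₁) * g (o d₂))
      = (p d₁ * f true + (1 - p d₁) * f false) * (p d₂ * g true + (1 - p d₂) * g false) := by
  have h := expVal_prod_apply p fun d b => (if d = d₁ then f b else 1) * (if d = d₂ then g b else 1)
  have hfactor : ∀ d,
      (p d * ((if d = d₁ then f true else 1) * (if d = d₂ then g true else 1))
        + (1 - p d) * ((if d = d₁ then f false else 1) * (if d = d₂ then g false else 1)))
      = (if d = d₁ then p d₁ * f true + (1 - p d₁) * f false else 1)
        * (if d = d₂ then p d₂ * g true + (1 - p d₂) * g false else 1) := by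
    intro d
    by_cases h₁ : d = d₁
    · subst h₁; simp [hne]
    · by_cases h₂ : d = d₂
      · subst h₂; simp [h₁]
      · simp only [h₁, h₂, if_false]; ring
  simpa only [prod_mul_distrib, prod_ite_eq', mem_univ, if_true, hfactor] using h

lemma expVal_centered_mul_centered (d₁ d₂ : D) :
    expVal p (fun o => ((if o d₁ then (1 : ℝ) else 0) - p d₁) * ((if o d₂ then (1 : ℝ) else 0) - p d₂))
      = if d₁ = d₂ then p d₁ * (1 - p d₁) else 0 := by
  by_cases hne : d₁ = d₂
  · subst hne
    rw [expVal_comp_eval p d₁ fun b => ((if b then (1 : ℝ) else 0) - p d₁) * ((if b then 1 else 0) - p d₁)]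
    simp only [if_true, Bool.false_eq_true, if_false]
    ring
  · rw [expVal_comp_eval_mul_comp_eval p hne (fun b => (if b then (1 : ℝ) else 0) - p d₁)
      (fun b => (if b then (1 : ℝ) else 0) - p d₂), if_neg hne]
    simp only [if_true, Bool.false_eq_true, if_false]
    ring

lemma varVal_const_add_sum_mul_indicator (c : ℝ) (a : D → ℝ) :
    varVal p (fun o => c + ∑ d, a d * (if o d then (1 : ℝ) else 0))
      = ∑ d, a d ^ 2 * (p d * (1 - p d)) := by
  have hmean : expVal p (fun o => c + ∑ d, a d * (if o d then (1 : ℝ) else 0))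
      = c + ∑ d, a d * p d := by
    rw [expVal_add, expVal_const, expVal_sum]
    congr 1
    refine sum_congr rfl fun d _ => ?_
    rw [expVal_const_mul, expVal_comp_eval p d fun b => if b then (1 : ℝ) else 0]
    simp
  have hdev : ∀ o : D → Bool,
      (c + ∑ d, a d * (if o d then (1 : ℝ) else 0) - (c + ∑ d, a d * p d)) ^ 2
        = ∑ d₁, ∑ d₂, a d₁ * a d₂ *
            (((if o d₁ then (1 : ℝ) else 0) - p d₁) * ((if o d₂ then (1 : ℝ) else 0) - p d₂)) := by
    intro o
    rw [add_sub_add_left_eq_sub, ← sum_sub_distrib, sq, sum_mul_sum]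
    exact sum_congr rfl fun _ _ => sum_congr rfl fun _ _ => by ring
  simp only [varVal]
  rw [hmean]
  simp only [hdev]
  simp only [expVal_sum, expVal_const_mul, expVal_centered_mul_centered, mul_ite, mul_zero,
    sum_ite_eq, mem_univ, if_true]
  exact sum_congr rfl fun d _ => by ring

lemma varVal_const_add_mul_sum_ipw (c k : ℝ) (x : D → ℝ) (hp : ∀ d, p d ≠ 0) :
    varVal p (fun o => c + k * ∑ d, (if o d then (1 : ℝ) else 0) * x d / p d)
      = k ^ 2 * ∑ d, x d ^ 2 * (1 - p d) / p d := by
  have hform : ∀ o : D → Bool, c + k * ∑ d, (if o d then (1 : ℝ) else 0) * x d / p d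
      = c + ∑ d, k * x d / p d * (if o d then (1 : ℝ) else 0) := by
    intro o
    rw [mul_sum]
    exact congrArg _ (sum_congr rfl fun d _ => by ring)
  simp only [hform]
  rw [varVal_const_add_sum_mul_indicator, mul_sum]
  refine sum_congr rfl fun d _ => ?_
  field_simp [hp d]

end BernoulliExpectation

theorem dr_variance_general {D : Type*} [Fintype D] [DecidableEq D]
    (e ehat p : D → ℝ) (hp : ∀ d, 0 < p d ∧ p d ≤ 1) :
    varVal p (fun o => (Fintype.card D : ℝ)⁻¹ *
        ∑ d, (ehat d + (if o d then (1 : ℝ) else 0) * (e d - ehat d) / p d))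
      = ((Fintype.card D : ℝ) ^ 2)⁻¹ * ∑ d, (e d - ehat d) ^ 2 * (1 - p d) / p d ∧
    ((∀ d, |e d - ehat d| ≤ |e d|) →
      varVal p (fun o => (Fintype.card D : ℝ)⁻¹ *
          ∑ d, (ehat d + (if o d then (1 : ℝ) else 0) * (e d - ehat d) / p d))
        ≤ varVal p (fun o => (Fintype.card D : ℝ)⁻¹ *
            ∑ d, (if o d then (1 : ℝ) else 0) * e d / p d)) := by
  set n : ℝ := (Fintype.card D : ℝ)
  have hp0 : ∀ d, p d ≠ 0 := fun d => (hp d).1.ne'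
  have hDR : varVal p (fun o => n⁻¹ *
      ∑ d, (ehat d + (if o d then (1 : ℝ) else 0) * (e d - ehat d) / p d))
        = n⁻¹ ^ 2 * ∑ d, (e d - ehat d) ^ 2 * (1 - p d) / p d := by
    simpa only [sum_add_distrib, mul_add] using
      varVal_const_add_mul_sum_ipw p (n⁻¹ * ∑ d, ehat d) n⁻¹ (fun d => e d - ehat d) hp0
  have hIPW : varVal p (fun o => n⁻¹ * ∑ d, (if o d then (1 : ℝ) else 0) * e d / p d)
      = n⁻¹ ^ 2 * ∑ d, e d ^ 2 * (1 - p d) / p d := by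
    simpa only [zero_add] using varVal_const_add_mul_sum_ipw p 0 n⁻¹ e hp0
  refine ⟨by rw [hDR, inv_pow], fun hδ => ?_⟩
  rw [hDR, hIPW]
  refine mul_le_mul_of_nonneg_left (sum_le_sum fun d _ => ?_) (sq_nonneg _)
  have h1p : 0 ≤ 1 - p d := sub_nonneg.mpr (hp d).2
  gcongr ?_ * _ / _
  · exact (hp d).1.le
  · exact sq_le_sq.mpr (hδ d)

/-- The variance of the DR estimator with accurate propensities equals
`(1/|D|²) Σ δ² (1-p)/p`; if `|δ| ≤ |e|` entrywise it is at most the IPW variance. -/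
theorem dr_variance {D : Type*} [Fintype D] [DecidableEq D] [Nonempty D]
    (e ehat p : D → ℝ) (hp : ∀ d, 0 < p d ∧ p d ≤ 1) :
    varVal p (fun o => (Fintype.card D : ℝ)⁻¹ *
        ∑ d, (ehat d + (if o d then (1 : ℝ) else 0) * (e d - ehat d) / p d))
      = ((Fintype.card D : ℝ) ^ 2)⁻¹ * ∑ d, (e d - ehat d) ^ 2 * (1 - p d) / p d ∧
    ((∀ d, |e d - ehat d| ≤ |e d|) →
      varVal p (fun o => (Fintype.card D : ℝ)⁻¹ *
          ∑ d, (ehat d + (if o d then (1 : ℝ) else 0) * (e d - ehat d) / p d))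
        ≤ varVal p (fun o => (Fintype.card D : ℝ)⁻¹ *
            ∑ d, (if o d then (1 : ℝ) else 0) * e d / p d)) :=
  dr_variance_general e ehat p hp
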